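/- For a general linear quantum system: (i) there exist a nonnegative integer n₁ and a matrix Z₁ ∈ ℂ^{n×n₁} with Z₁ᴴ Z₁ = I_{n₁} such that the column space of the matrix [Z₁ 0; 0 conj(Z₁)] ∈ ℂ^{2n×2n₁} equals R_co := Im(C_G) ∩ Im(O_Gᴴ); (ii) there exist a nonnegative integer n₂ and a matrix Z₂ ∈ ℂ^{n×n₂} with Z₂ᴴ Z₂ = I_{n₂} such that the column space of [Z₂ 0; 0 conj(Z₂)] ∈ ℂ^{2n×2n₂} equals R_c̄ō := Ker(C_Gᴴ) ∩ Ker(O_G). -/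

import Mathlib

/-! Because `𝒜` and `ℬ` are doubled-up, the controllable subspace `S = Im(C_G)` is invariant
under the conjugate-linear involution `x ↦ conj (swap x)`. Moreover `𝒜ᴴ = J (-𝒜 + ℬ𝒞) J` and
`𝒞ᴴ = J ℬ (-J)`, and the feedback `𝒜 ↦ -𝒜 + ℬ𝒞` does not change the controllable subspace, so
the observable subspace `Im(O_Gᴴ)` is `J S`. Hence `R_co = S ∩ J S` and
`R_c̄ō = S^⊥ ∩ J S^⊥` (as `J` is unitary) both have the form `T ∩ J T` with `T` invariant under
the involution. Such a space is `J`-invariant, so it splits as `U ⊕ U'` along `ℂⁿ ⊕ ℂⁿ`; the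
involution forces `U' = conj U`, and an orthonormal basis of `U` gives the columns of `Z`. -/

open Matrix

noncomputable section

/-- `J_k = [I 0; 0 -I]` acting on `ℂ^{2k} = ℂ^k ⊕ ℂ^k`. -/
def Jmat (k : ℕ) : Matrix (Fin k ⊕ Fin k) (Fin k ⊕ Fin k) ℂ :=
  Matrix.fromBlocks 1 0 0 (-1)

/-- Entrywise complex conjugation of a matrix. -/
def mconj {α β : Type} (M : Matrix α β ℂ) : Matrix α β ℂ :=
  M.map (starRingEnd ℂ)

/-- The doubled-up matrix `Δ(U,V) = [U V; conj V  conj U]`. -/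
def doubledUp {k r : ℕ} (U V : Matrix (Fin k) (Fin r) ℂ) :
    Matrix (Fin k ⊕ Fin k) (Fin r ⊕ Fin r) ℂ :=
  Matrix.fromBlocks U V (mconj V) (mconj U)

/-- The ♭-adjoint `X♭ = J_r Xᴴ J_k` of `X ∈ ℂ^{2k×2r}`. -/
def flat {k r : ℕ} (X : Matrix (Fin k ⊕ Fin k) (Fin r ⊕ Fin r) ℂ) :
    Matrix (Fin r ⊕ Fin r) (Fin k ⊕ Fin k) ℂ :=
  Jmat r * Xᴴ * Jmat k

/-- Orthogonal complement of a subspace of `ℂ^ι` w.r.t. the standard Hermitian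
inner product `⟪y, x⟫ = (star y) ⬝ᵥ x`. -/
def orthComp {ι : Type} [Fintype ι] (S : Submodule ℂ (ι → ℂ)) : Submodule ℂ (ι → ℂ) where
  carrier := {x | ∀ y ∈ S, star y ⬝ᵥ x = 0}
  add_mem' := by
    intro a b ha hb y hy
    simp only [Set.mem_setOf_eq] at *
    rw [dotProduct_add, ha y hy, hb y hy, add_zero]
  zero_mem' := by
    intro y hy
    simp
  smul_mem' := by
    intro c x hx y hy
    simp only [Set.mem_setOf_eq] at *
    rw [dotProduct_smul, hx y hy, smul_zero]

/-- The controllable subspace `Im(C_G) = ∑_{k<2n} Im(𝒜ᵏℬ)`. -/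
def ctrbSub (n m : ℕ) (𝒜 : Matrix (Fin n ⊕ Fin n) (Fin n ⊕ Fin n) ℂ)
    (ℬ : Matrix (Fin n ⊕ Fin n) (Fin m ⊕ Fin m) ℂ) : Submodule ℂ (Fin n ⊕ Fin n → ℂ) :=
  ⨆ k ∈ Finset.range (2 * n), LinearMap.range ((𝒜 ^ k * ℬ).mulVecLin)

/-- The unobservable subspace `Ker(O_G) = ⋂_{k<2n} Ker(𝒞𝒜ᵏ)`. -/
def unobsSub (n m : ℕ) (𝒜 : Matrix (Fin n ⊕ Fin n) (Fin n ⊕ Fin n) ℂ)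
    (𝒞 : Matrix (Fin m ⊕ Fin m) (Fin n ⊕ Fin n) ℂ) : Submodule ℂ (Fin n ⊕ Fin n → ℂ) :=
  ⨅ k ∈ Finset.range (2 * n), LinearMap.ker ((𝒞 * 𝒜 ^ k).mulVecLin)

namespace Matrix

section Controllability

variable {K ι κ : Type*} [Field K] [Fintype ι] [DecidableEq ι] [Fintype κ]

def controllableSubspace (A : Matrix ι ι K) (B : Matrix ι κ K) : Submodule K (ι → K) :=
  ⨆ k : ℕ, LinearMap.range (A ^ k * B).mulVecLin

theorem range_pow_mul_le_controllableSubspace (A : Matrix ι ι K) (B : Matrix ι κ K) (k : ℕ) :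
    LinearMap.range (A ^ k * B).mulVecLin ≤ controllableSubspace A B :=
  le_iSup (fun k => LinearMap.range (A ^ k * B).mulVecLin) k

theorem mulVec_mem_controllableSubspace {A : Matrix ι ι K} {B : Matrix ι κ K} {x : ι → K}
    (hx : x ∈ controllableSubspace A B) : A *ᵥ x ∈ controllableSubspace A B := by
  suffices controllableSubspace A B ≤ (controllableSubspace A B).comap A.mulVecLin from this hx
  refine iSup_le fun k => ?_
  rintro _ ⟨u, rfl⟩
  refine range_pow_mul_le_controllableSubspace A B (k + 1) ⟨u, ?_⟩
  simp [pow_succ', Matrix.mul_assoc]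

theorem controllableSubspace_le {A : Matrix ι ι K} {B : Matrix ι κ K} {W : Submodule K (ι → K)}
    (hB : LinearMap.range B.mulVecLin ≤ W) (hA : W ≤ W.comap A.mulVecLin) :
    controllableSubspace A B ≤ W := by
  refine iSup_le fun k => ?_
  induction k with
  | zero => simpa using hB
  | succ k ih =>
    rintro _ ⟨u, rfl⟩
    simpa [pow_succ', Matrix.mul_assoc] using hA (ih ⟨u, rfl⟩)

/-- Feedback invariance: `A` and `-A + B F` have the same invariant subspaces containing the
range of `B`. -/
theorem controllableSubspace_neg_add_mul (A : Matrix ι ι K) (B : Matrix ι κ K)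
    (F : Matrix κ ι K) : controllableSubspace (-A + B * F) B = controllableSubspace A B := by
  have key : ∀ A' : Matrix ι ι K,
      controllableSubspace (-A' + B * F) B ≤ controllableSubspace A' B := by
    intro A'
    refine controllableSubspace_le (by simpa using range_pow_mul_le_controllableSubspace A' B 0)
      fun x hx => ?_
    rw [Submodule.mem_comap, mulVecLin_apply, add_mulVec, neg_mulVec, ← mulVec_mulVec]
    exact add_mem (neg_mem (mulVec_mem_controllableSubspace hx))
      (by simpa using range_pow_mul_le_controllableSubspace A' B 0 ⟨F *ᵥ x, rfl⟩)
  refine le_antisymm (key A) ?_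
  simpa using key (-A + B * F)

theorem controllableSubspace_mul_mul [DecidableEq κ] {A : Matrix ι ι K} {B : Matrix ι κ K}
    {P Q : Matrix ι ι K} {R S : Matrix κ κ K} (hQP : Q * P = 1) (hRS : R * S = 1) :
    controllableSubspace (P * A * Q) (P * B * R) = (controllableSubspace A B).map P.mulVecLin := by
  have hpow : ∀ k, (P * A * Q) ^ k * (P * B * R) = P * (A ^ k * B) * R := by
    intro k
    induction k with
    | zero => simp [Matrix.mul_assoc]
    | succ k ih =>
      calc (P * A * Q) ^ (k + 1) * (P * B * R) = P * A * (Q * P) * (A ^ k * B) * R := by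
            rw [pow_succ', Matrix.mul_assoc, ih]; simp only [Matrix.mul_assoc]
        _ = P * (A ^ (k + 1) * B) * R := by
            rw [hQP, Matrix.mul_one, pow_succ']; simp only [Matrix.mul_assoc]
  have hrange : ∀ X : Matrix ι κ K,
      LinearMap.range (P * X * R).mulVecLin = (LinearMap.range X.mulVecLin).map P.mulVecLin := by
    intro X
    have hR : LinearMap.range R.mulVecLin = ⊤ :=
      LinearMap.range_eq_top.mpr fun v => ⟨S *ᵥ v, by simp [mulVec_mulVec, hRS]⟩
    rw [mulVecLin_mul, LinearMap.range_comp, hR, Submodule.map_top, mulVecLin_mul,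
      LinearMap.range_comp]
  simp only [controllableSubspace, hpow, hrange, Submodule.map_iSup]

/-- Cayley–Hamilton: every power `A ^ k` is a polynomial in `A` of degree `< card ι`. -/
theorem biSup_range_pow_mul_eq_controllableSubspace {N : ℕ} (hN : Fintype.card ι ≤ N)
    (A : Matrix ι ι K) (B : Matrix ι κ K) :
    ⨆ k ∈ Finset.range N, LinearMap.range (A ^ k * B).mulVecLin = controllableSubspace A B := by
  refine le_antisymm (iSup₂_le fun k _ => range_pow_mul_le_controllableSubspace A B k)
    (iSup_le fun k => ?_)
  rintro _ ⟨u, rfl⟩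
  rcases isEmpty_or_nonempty ι with hι | hι
  · simp [Subsingleton.elim _ (0 : ι → K)]
  have hdeg : (Polynomial.X ^ k %ₘ A.charpoly).natDegree < N := by
    refine (Polynomial.natDegree_modByMonic_lt _ A.charpoly_monic fun h => ?_).trans_le ?_
    · have hdim := A.charpoly_natDegree_eq_dim
      rw [h, Polynomial.natDegree_one] at hdim
      exact Fintype.card_ne_zero hdim.symm
    · rwa [A.charpoly_natDegree_eq_dim]
  rw [mulVecLin_apply, ← mulVec_mulVec, A.pow_eq_aeval_mod_charpoly,
    Polynomial.aeval_eq_sum_range' hdeg, sum_mulVec]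
  refine Submodule.sum_mem _ fun i hi => ?_
  rw [smul_mulVec, mulVec_mulVec]
  exact Submodule.smul_mem _ _ (Submodule.mem_iSup_of_mem i (Submodule.mem_iSup_of_mem hi
    ⟨u, rfl⟩))

end Controllability

end Matrix

section OrthComp

variable {ι : Type} [Fintype ι]

theorem mem_orthComp {S : Submodule ℂ (ι → ℂ)} {x : ι → ℂ} :
    x ∈ orthComp S ↔ ∀ y ∈ S, star y ⬝ᵥ x = 0 :=
  Iff.rfl

theorem star_mulVec_dotProduct {κ : Type} [Fintype κ] (M : Matrix ι κ ℂ) (u : κ → ℂ)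
    (x : ι → ℂ) : star (M *ᵥ u) ⬝ᵥ x = star u ⬝ᵥ (Mᴴ *ᵥ x) := by
  rw [star_mulVec, ← dotProduct_mulVec]

theorem orthComp_gc :
    GaloisConnection (α := Submodule ℂ (ι → ℂ)) (β := (Submodule ℂ (ι → ℂ))ᵒᵈ)
      orthComp orthComp := fun _ _ =>
  ⟨fun h s hs t ht => by rw [star_dotProduct, h ht s hs, star_zero],
    fun h t ht s hs => by rw [star_dotProduct, h hs t ht, star_zero]⟩

theorem orthComp_iSup {κ : Sort*} (S : κ → Submodule ℂ (ι → ℂ)) :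
    orthComp (⨆ i, S i) = ⨅ i, orthComp (S i) :=
  orthComp_gc.l_iSup

theorem orthComp_eq_comap_orthogonal (S : Submodule ℂ (ι → ℂ)) :
    orthComp S = ((S.comap (WithLp.linearEquiv 2 ℂ (ι → ℂ)).toLinearMap)ᗮ).comap
      (WithLp.linearEquiv 2 ℂ (ι → ℂ)).symm.toLinearMap := by
  ext x
  simp only [Submodule.mem_comap, Submodule.mem_orthogonal,
    EuclideanSpace.inner_eq_star_dotProduct, LinearEquiv.coe_coe, WithLp.linearEquiv_apply,
    WithLp.linearEquiv_symm_apply]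
  refine ⟨fun h u hu => ?_, fun h y hy => ?_⟩
  · rw [dotProduct_comm]
    exact h _ hu
  · simpa [dotProduct_comm] using h (WithLp.toLp 2 y) hy

theorem orthComp_orthComp (S : Submodule ℂ (ι → ℂ)) : orthComp (orthComp S) = S := by
  rw [orthComp_eq_comap_orthogonal, orthComp_eq_comap_orthogonal, ← Submodule.comap_comp,
    LinearEquiv.symm_comp, Submodule.comap_id, Submodule.orthogonal_orthogonal,
    ← Submodule.comap_comp, LinearEquiv.comp_symm, Submodule.comap_id]

theorem ker_mulVecLin_eq_orthComp_range {κ : Type} [Fintype κ] (M : Matrix κ ι ℂ) :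
    LinearMap.ker M.mulVecLin = orthComp (LinearMap.range Mᴴ.mulVecLin) := by
  ext x
  simp only [LinearMap.mem_ker, mem_orthComp, LinearMap.mem_range, forall_exists_index,
    forall_apply_eq_imp_iff, mulVecLin_apply, star_mulVec_dotProduct,
    conjTranspose_conjTranspose]
  refine ⟨fun h u => by rw [h, dotProduct_zero], fun h => dotProduct_eq_zero _ fun w => ?_⟩
  simpa [dotProduct_comm] using h (star w)

theorem mem_map_mulVecLin_of_mem_unitary [DecidableEq ι] {U : Matrix ι ι ℂ}
    (hU : U ∈ unitary (Matrix ι ι ℂ)) {S : Submodule ℂ (ι → ℂ)} {x : ι → ℂ} :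
    x ∈ S.map U.mulVecLin ↔ Uᴴ *ᵥ x ∈ S := by
  have h₁ : Uᴴ * U = 1 := Unitary.star_mul_self_of_mem hU
  have h₂ : U * Uᴴ = 1 := Unitary.mul_star_self_of_mem hU
  refine ⟨?_, fun hx => ⟨Uᴴ *ᵥ x, hx, by simp [mulVec_mulVec, h₂]⟩⟩
  rintro ⟨s, hs, rfl⟩
  simpa [mulVec_mulVec, h₁] using hs

theorem orthComp_map_of_mem_unitary [DecidableEq ι] {U : Matrix ι ι ℂ}
    (hU : U ∈ unitary (Matrix ι ι ℂ)) (S : Submodule ℂ (ι → ℂ)) :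
    orthComp (S.map U.mulVecLin) = (orthComp S).map U.mulVecLin := by
  ext x
  rw [mem_map_mulVecLin_of_mem_unitary hU]
  simp only [mem_orthComp, Submodule.mem_map, forall_exists_index, and_imp,
    forall_apply_eq_imp_iff₂, mulVecLin_apply, star_mulVec_dotProduct]

theorem biInf_ker_mul_pow_eq_orthComp {κ : Type} [DecidableEq ι] [Fintype κ]
    {N : ℕ} (hN : Fintype.card ι ≤ N) (A : Matrix ι ι ℂ) (C : Matrix κ ι ℂ) :
    ⨅ k ∈ Finset.range N, LinearMap.ker (C * A ^ k).mulVecLin =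
      orthComp (controllableSubspace Aᴴ Cᴴ) := by
  simp only [← biSup_range_pow_mul_eq_controllableSubspace hN, orthComp_iSup,
    ker_mulVecLin_eq_orthComp_range, conjTranspose_mul, conjTranspose_pow]

end OrthComp

section Mconj

variable {ι κ μ : Type}

theorem mconj_mul [Fintype κ] (M : Matrix ι κ ℂ) (N : Matrix κ μ ℂ) :
    mconj (M * N) = mconj M * mconj N :=
  Matrix.map_mul

theorem mconj_sub (M N : Matrix ι κ ℂ) : mconj (M - N) = mconj M - mconj N := by
  ext; simp [mconj]

theorem mconj_neg (M : Matrix ι κ ℂ) : mconj (-M) = -mconj M := by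
  ext; simp [mconj]

theorem mconj_smul (c : ℂ) (M : Matrix ι κ ℂ) : mconj (c • M) = star c • mconj M := by
  ext; simp [mconj]

theorem mconj_one [DecidableEq ι] : mconj (1 : Matrix ι ι ℂ) = 1 := by
  simp [mconj, Matrix.map_one]

theorem mconj_conjTranspose (M : Matrix ι κ ℂ) : mconj Mᴴ = (mconj M)ᴴ := by
  ext; simp [mconj]

theorem mconj_mulVec [Fintype κ] (Z : Matrix ι κ ℂ) (c : κ → ℂ) :
    mconj Z *ᵥ c = star (Z *ᵥ star c) := by
  ext i
  simp [mconj, mulVec, dotProduct, star_sum]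

end Mconj

section Jmat

theorem Jmat_mul_self (k : ℕ) : Jmat k * Jmat k = 1 := by
  simp [Jmat, fromBlocks_multiply]

theorem conjTranspose_Jmat (k : ℕ) : (Jmat k)ᴴ = Jmat k := by
  simp [Jmat, fromBlocks_conjTranspose]

theorem Jmat_mem_unitary (k : ℕ) :
    Jmat k ∈ unitary (Matrix (Fin k ⊕ Fin k) (Fin k ⊕ Fin k) ℂ) := by
  rw [Unitary.mem_iff, star_eq_conjTranspose, conjTranspose_Jmat, Jmat_mul_self, and_self]

theorem mconj_Jmat (k : ℕ) : mconj (Jmat k) = Jmat k := by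
  simp [mconj, Jmat, fromBlocks_map, Matrix.map_neg, Matrix.map_one]

theorem submatrix_swap_Jmat (k : ℕ) : (Jmat k).submatrix Sum.swap Sum.swap = -Jmat k := by
  simp [Jmat, fromBlocks_neg]

theorem Jmat_mulVec {k : ℕ} (x : Fin k ⊕ Fin k → ℂ) :
    Jmat k *ᵥ x = Sum.elim (x ∘ Sum.inl) (-(x ∘ Sum.inr)) := by
  simp [Jmat, fromBlocks_mulVec, neg_mulVec]

theorem Jmat_mul_Jmat_mul {k : ℕ} {ι : Type} (X : Matrix (Fin k ⊕ Fin k) ι ℂ) :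
    Jmat k * (Jmat k * X) = X := by
  rw [← Matrix.mul_assoc, Jmat_mul_self, Matrix.one_mul]

theorem mem_map_Jmat {k : ℕ} {T : Submodule ℂ (Fin k ⊕ Fin k → ℂ)}
    {x : Fin k ⊕ Fin k → ℂ} :
    x ∈ T.map (Jmat k).mulVecLin ↔ Jmat k *ᵥ x ∈ T := by
  rw [mem_map_mulVecLin_of_mem_unitary (Jmat_mem_unitary k), conjTranspose_Jmat]

end Jmat

section DoubledUp

variable {ι κ μ : Type}

def swapConj : (ι ⊕ ι → ℂ) →ₗ⋆[ℂ] (ι ⊕ ι → ℂ) where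
  toFun x p := star (x p.swap)
  map_add' x y := by ext; simp
  map_smul' c x := by ext; simp

theorem swapConj_apply (x : ι ⊕ ι → ℂ) (p : ι ⊕ ι) : swapConj x p = star (x p.swap) :=
  rfl

theorem swapConj_swapConj (x : ι ⊕ ι → ℂ) : swapConj (swapConj x) = x := by
  ext p
  simp [swapConj_apply]

/-- Entrywise form of `M = Δ(U, V)` for some `U`, `V`. -/
def IsDoubledUp (M : Matrix (ι ⊕ ι) (κ ⊕ κ) ℂ) : Prop :=
  M.submatrix Sum.swap Sum.swap = mconj M

theorem submatrix_swap_mul [Fintype κ] (M : Matrix (ι ⊕ ι) (κ ⊕ κ) ℂ)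
    (N : Matrix (κ ⊕ κ) (μ ⊕ μ) ℂ) :
    (M * N).submatrix Sum.swap Sum.swap =
      M.submatrix Sum.swap Sum.swap * N.submatrix Sum.swap Sum.swap :=
  (submatrix_mul_equiv M N Sum.swap (Equiv.sumComm κ κ) Sum.swap).symm

theorem isDoubledUp_doubledUp {k r : ℕ} (U V : Matrix (Fin k) (Fin r) ℂ) :
    IsDoubledUp (doubledUp U V) := by
  simp [IsDoubledUp, doubledUp, mconj, fromBlocks_map, Matrix.map_map, Function.comp_def]

theorem IsDoubledUp.mul [Fintype κ] {M : Matrix (ι ⊕ ι) (κ ⊕ κ) ℂ}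
    {N : Matrix (κ ⊕ κ) (μ ⊕ μ) ℂ} (hM : IsDoubledUp M) (hN : IsDoubledUp N) :
    IsDoubledUp (M * N) := by
  rw [IsDoubledUp, submatrix_swap_mul, hM, hN, mconj_mul]

theorem IsDoubledUp.sub {M N : Matrix (ι ⊕ ι) (κ ⊕ κ) ℂ} (hM : IsDoubledUp M)
    (hN : IsDoubledUp N) : IsDoubledUp (M - N) := by
  unfold IsDoubledUp at *
  rw [mconj_sub, ← hM, ← hN]
  rfl

theorem IsDoubledUp.neg {M : Matrix (ι ⊕ ι) (κ ⊕ κ) ℂ} (hM : IsDoubledUp M) :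
    IsDoubledUp (-M) := by
  unfold IsDoubledUp at *
  rw [mconj_neg, ← hM]
  rfl

theorem IsDoubledUp.smul {M : Matrix (ι ⊕ ι) (κ ⊕ κ) ℂ} {c : ℂ} (hc : IsSelfAdjoint c)
    (hM : IsDoubledUp M) : IsDoubledUp (c • M) := by
  unfold IsDoubledUp at *
  rw [mconj_smul, hc.star_eq, ← hM]
  rfl

theorem isDoubledUp_one [DecidableEq ι] : IsDoubledUp (1 : Matrix (ι ⊕ ι) (ι ⊕ ι) ℂ) := by
  rw [IsDoubledUp, mconj_one]
  exact submatrix_one_equiv (Equiv.sumComm ι ι)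

theorem IsDoubledUp.pow [Fintype ι] [DecidableEq ι] {M : Matrix (ι ⊕ ι) (ι ⊕ ι) ℂ}
    (hM : IsDoubledUp M) (j : ℕ) : IsDoubledUp (M ^ j) := by
  induction j with
  | zero => exact isDoubledUp_one
  | succ j ih => rw [pow_succ]; exact ih.mul hM

theorem IsDoubledUp.flat {k r : ℕ} {M : Matrix (Fin k ⊕ Fin k) (Fin r ⊕ Fin r) ℂ}
    (hM : IsDoubledUp M) : IsDoubledUp (flat M) := by
  have hMH : Mᴴ.submatrix Sum.swap Sum.swap = mconj Mᴴ := by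
    rw [← conjTranspose_submatrix, hM, mconj_conjTranspose]
  simp only [IsDoubledUp, _root_.flat, submatrix_swap_mul, submatrix_swap_Jmat, hMH, mconj_mul,
    mconj_Jmat, Matrix.neg_mul, Matrix.mul_neg, neg_neg]

theorem IsDoubledUp.I_smul_Jmat_mul {k r : ℕ} {M : Matrix (Fin k ⊕ Fin k) (Fin r ⊕ Fin r) ℂ}
    (hM : IsDoubledUp M) : IsDoubledUp (Complex.I • (Jmat k * M)) := by
  change Complex.I • (Jmat k * M).submatrix Sum.swap Sum.swap = _
  rw [submatrix_swap_mul, submatrix_swap_Jmat, hM, mconj_smul,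
    mconj_mul, mconj_Jmat, Complex.star_def, Complex.conj_I, Matrix.neg_mul, smul_neg, neg_smul]

theorem IsDoubledUp.mulVec_swapConj [Fintype κ] {M : Matrix (ι ⊕ ι) (κ ⊕ κ) ℂ}
    (hM : IsDoubledUp M) (x : κ ⊕ κ → ℂ) : M *ᵥ swapConj x = swapConj (M *ᵥ x) := by
  ext p
  have h : ∀ q, M p.swap q = star (M p q.swap) := fun q => by
    simpa [mconj] using congrFun (congrFun hM p) q.swap
  simp only [swapConj_apply, mulVec, dotProduct, star_sum, star_mul', h, star_star]
  exact Fintype.sum_equiv (Equiv.sumComm κ κ) _ _ fun q => by simp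

theorem Jmat_mulVec_swapConj {k : ℕ} (x : Fin k ⊕ Fin k → ℂ) :
    Jmat k *ᵥ swapConj x = -swapConj (Jmat k *ᵥ x) := by
  ext (p | p) <;> simp [Jmat_mulVec, swapConj_apply]

theorem star_swapConj_dotProduct_swapConj [Fintype ι] (x y : ι ⊕ ι → ℂ) :
    star (swapConj y) ⬝ᵥ swapConj x = star (star y ⬝ᵥ x) := by
  simp only [dotProduct, Pi.star_apply, swapConj_apply, star_sum, star_mul', star_star]
  exact Fintype.sum_equiv (Equiv.sumComm ι ι) _ _ fun p => by simp

end DoubledUp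

section Extraction

theorem exists_orthonormal_columns_range_eq {𝕜 ι : Type*} [RCLike 𝕜] [Fintype ι]
    (S : Submodule 𝕜 (ι → 𝕜)) :
    ∃ (r : ℕ) (Z : Matrix ι (Fin r) 𝕜), Zᴴ * Z = 1 ∧ LinearMap.range Z.mulVecLin = S := by
  let e := WithLp.linearEquiv 2 𝕜 (ι → 𝕜)
  let S' := S.comap e.toLinearMap
  let b := stdOrthonormalBasis 𝕜 S'
  let v : Fin _ → EuclideanSpace 𝕜 ι := fun j => b j
  refine ⟨_, Matrix.of fun i j => v j i, ?_, ?_⟩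
  · have hv : Orthonormal 𝕜 v := b.orthonormal.comp_linearIsometry S'.subtypeₗᵢ
    rw [← gram_eq_one_iff_orthonormal.mpr hv,
      gram_eq_conjTranspose_mul (EuclideanSpace.basisFun ι 𝕜)]
    rfl
  · have hcol : Set.range (Matrix.of fun i j => v j i).col =
        (e.toLinearMap ∘ₗ S'.subtype) '' Set.range b := by
      rw [← Set.range_comp]
      rfl
    rw [range_mulVecLin, hcol, Submodule.span_image, ← b.coe_toBasis, b.toBasis.span_eq,
      Submodule.map_comp, Submodule.map_top, Submodule.range_subtype,
      Submodule.map_comap_eq_of_surjective e.surjective]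

theorem mem_range_fromBlocks_zero_zero {R l m n o : Type*} [CommSemiring R] [Fintype l]
    [Fintype o] {A : Matrix m l R} {D : Matrix n o R} {x : m ⊕ n → R} :
    x ∈ LinearMap.range (fromBlocks A 0 0 D).mulVecLin ↔
      x ∘ Sum.inl ∈ LinearMap.range A.mulVecLin ∧ x ∘ Sum.inr ∈ LinearMap.range D.mulVecLin := by
  simp only [LinearMap.mem_range, mulVecLin_apply]
  constructor
  · rintro ⟨c, rfl⟩
    exact ⟨⟨c ∘ Sum.inl, by simp [fromBlocks_mulVec]⟩, ⟨c ∘ Sum.inr, by simp [fromBlocks_mulVec]⟩⟩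
  · rintro ⟨⟨a, ha⟩, ⟨d, hd⟩⟩
    refine ⟨Sum.elim a d, ?_⟩
    ext (i | i)
    · simpa [fromBlocks_mulVec] using congrFun ha i
    · simpa [fromBlocks_mulVec] using congrFun hd i

theorem mem_range_mconj {ι κ : Type} [Fintype κ] {Z : Matrix ι κ ℂ} {x : ι → ℂ} :
    x ∈ LinearMap.range (mconj Z).mulVecLin ↔ star x ∈ LinearMap.range Z.mulVecLin := by
  simp only [LinearMap.mem_range, mulVecLin_apply, mconj_mulVec]
  constructor
  · rintro ⟨c, rfl⟩
    exact ⟨star c, by rw [star_star]⟩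
  · rintro ⟨c, hc⟩
    exact ⟨star c, by rw [star_star, hc, star_star]⟩

variable {k : ℕ}

theorem elim_inl_zero_mem {V : Submodule ℂ (Fin k ⊕ Fin k → ℂ)}
    (hJ : V ≤ V.comap (Jmat k).mulVecLin) {y : Fin k ⊕ Fin k → ℂ} (hy : y ∈ V) :
    Sum.elim (y ∘ Sum.inl) (0 : Fin k → ℂ) ∈ V := by
  have h : Sum.elim (y ∘ Sum.inl) (0 : Fin k → ℂ) = (2 : ℂ)⁻¹ • (y + Jmat k *ᵥ y) := by
    ext (i | i) <;> simp [Jmat_mulVec]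
    ring
  rw [h]
  exact V.smul_mem _ (V.add_mem hy (hJ hy))

theorem elim_zero_inr_mem {V : Submodule ℂ (Fin k ⊕ Fin k → ℂ)}
    (hJ : V ≤ V.comap (Jmat k).mulVecLin) {y : Fin k ⊕ Fin k → ℂ} (hy : y ∈ V) :
    Sum.elim (0 : Fin k → ℂ) (y ∘ Sum.inr) ∈ V := by
  have h : Sum.elim (0 : Fin k → ℂ) (y ∘ Sum.inr) = (2 : ℂ)⁻¹ • (y - Jmat k *ᵥ y) := by
    ext (i | i) <;> simp [Jmat_mulVec]
    ring
  rw [h]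
  exact V.smul_mem _ (V.sub_mem hy (hJ hy))

theorem exists_range_fromBlocks_mconj_eq {V : Submodule ℂ (Fin k ⊕ Fin k → ℂ)}
    (hJ : V ≤ V.comap (Jmat k).mulVecLin) (hσ : V ≤ V.comap swapConj) :
    ∃ (r : ℕ) (Z : Matrix (Fin k) (Fin r) ℂ), Zᴴ * Z = 1 ∧
      LinearMap.range (fromBlocks Z 0 0 (mconj Z)).mulVecLin = V := by
  obtain ⟨r, Z, hZ, hrange⟩ :=
    exists_orthonormal_columns_range_eq (V.map (LinearMap.funLeft ℂ ℂ Sum.inl))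
  refine ⟨r, Z, hZ, ?_⟩
  ext x
  rw [mem_range_fromBlocks_zero_zero, mem_range_mconj, hrange]
  constructor
  · rintro ⟨⟨y, hy, hyx⟩, ⟨z, hz, hzx⟩⟩
    have hx : x = Sum.elim (y ∘ Sum.inl) 0 + Sum.elim (0 : Fin k → ℂ) (swapConj z ∘ Sum.inr) := by
      ext (i | i)
      · simpa using (congrFun hyx i).symm
      · simpa [swapConj_apply] using congrArg star (congrFun hzx i).symm
    rw [hx]
    exact V.add_mem (elim_inl_zero_mem hJ hy) (elim_zero_inr_mem hJ (hσ hz))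
  · intro hx
    exact ⟨⟨x, hx, rfl⟩, ⟨swapConj x, hσ hx, by ext i; simp [swapConj_apply]⟩⟩

end Extraction

section Invariance

theorem controllableSubspace_le_comap_swapConj {ι κ : Type} [Fintype ι] [DecidableEq ι]
    [Fintype κ] {A : Matrix (ι ⊕ ι) (ι ⊕ ι) ℂ} {B : Matrix (ι ⊕ ι) (κ ⊕ κ) ℂ}
    (hA : IsDoubledUp A) (hB : IsDoubledUp B) :
    controllableSubspace A B ≤ (controllableSubspace A B).comap swapConj := by
  refine iSup_le fun k => ?_
  rintro _ ⟨u, rfl⟩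
  rw [Submodule.mem_comap, mulVecLin_apply, ← ((hA.pow k).mul hB).mulVec_swapConj]
  exact range_pow_mul_le_controllableSubspace A B k ⟨_, rfl⟩

theorem orthComp_le_comap_swapConj {ι : Type} [Fintype ι] {T : Submodule ℂ (ι ⊕ ι → ℂ)}
    (hT : T ≤ T.comap swapConj) : orthComp T ≤ (orthComp T).comap swapConj := by
  intro x hx y hy
  rw [← swapConj_swapConj y, star_swapConj_dotProduct_swapConj, hx _ (hT hy), star_zero]

variable {k : ℕ}

theorem map_Jmat_le_comap_swapConj {T : Submodule ℂ (Fin k ⊕ Fin k → ℂ)}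
    (hT : T ≤ T.comap swapConj) :
    T.map (Jmat k).mulVecLin ≤ (T.map (Jmat k).mulVecLin).comap swapConj := by
  intro x hx
  rw [Submodule.mem_comap, mem_map_Jmat, Jmat_mulVec_swapConj]
  exact neg_mem (hT (mem_map_Jmat.mp hx))

theorem exists_range_fromBlocks_mconj_eq_inf_map_Jmat {T : Submodule ℂ (Fin k ⊕ Fin k → ℂ)}
    (hT : T ≤ T.comap swapConj) :
    ∃ (r : ℕ) (Z : Matrix (Fin k) (Fin r) ℂ), Zᴴ * Z = 1 ∧
      LinearMap.range (fromBlocks Z 0 0 (mconj Z)).mulVecLin = T ⊓ T.map (Jmat k).mulVecLin := by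
  refine exists_range_fromBlocks_mconj_eq (fun x hx => ?_)
    fun x hx => ⟨hT hx.1, map_Jmat_le_comap_swapConj hT hx.2⟩
  refine ⟨mem_map_Jmat.mp hx.2, mem_map_Jmat.mpr ?_⟩
  rw [mulVecLin_apply, mulVec_mulVec, Jmat_mul_self, one_mulVec]
  exact hx.1

end Invariance

namespace LinearQuantumSystem

variable {n m : ℕ} {Ω 𝒜 : Matrix (Fin n ⊕ Fin n) (Fin n ⊕ Fin n) ℂ}
  {𝒞 : Matrix (Fin m ⊕ Fin m) (Fin n ⊕ Fin n) ℂ} {ℬ : Matrix (Fin n ⊕ Fin n) (Fin m ⊕ Fin m) ℂ}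

theorem conjTranspose_A (hΩ : Ω.IsHermitian)
    (h𝒜 : 𝒜 = (-Complex.I) • (Jmat n * Ω) - (1 / 2 : ℂ) • (flat 𝒞 * 𝒞))
    (hℬ : ℬ = -flat 𝒞) : 𝒜ᴴ = Jmat n * (-𝒜 + ℬ * 𝒞) * Jmat n := by
  subst h𝒜 hℬ
  simp only [flat, conjTranspose_sub, conjTranspose_smul, conjTranspose_mul, conjTranspose_Jmat,
    conjTranspose_conjTranspose, hΩ.eq, star_neg, Complex.star_def, Complex.conj_I, map_div₀,
    map_one, map_ofNat, Matrix.mul_add, Matrix.mul_sub, Matrix.add_mul, Matrix.sub_mul,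
    Matrix.mul_neg, Matrix.neg_mul, Matrix.mul_smul, Matrix.smul_mul, Matrix.mul_assoc,
    Jmat_mul_Jmat_mul]
  module

theorem conjTranspose_C (hℬ : ℬ = -flat 𝒞) : 𝒞ᴴ = Jmat n * ℬ * (-Jmat m) := by
  subst hℬ
  simp only [flat, Matrix.mul_neg, Matrix.neg_mul, neg_neg, Matrix.mul_assoc, Jmat_mul_self,
    Matrix.mul_one, Jmat_mul_Jmat_mul]

theorem unobsSub_eq (hΩ : Ω.IsHermitian)
    (h𝒜 : 𝒜 = (-Complex.I) • (Jmat n * Ω) - (1 / 2 : ℂ) • (flat 𝒞 * 𝒞))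
    (hℬ : ℬ = -flat 𝒞) :
    unobsSub n m 𝒜 𝒞 = orthComp ((controllableSubspace 𝒜 ℬ).map (Jmat n).mulVecLin) := by
  have hJm : -Jmat m * -Jmat m = 1 := by rw [neg_mul_neg, Jmat_mul_self]
  rw [unobsSub, biInf_ker_mul_pow_eq_orthComp (by simp [two_mul]),
    conjTranspose_A hΩ h𝒜 hℬ, conjTranspose_C hℬ,
    controllableSubspace_mul_mul (Jmat_mul_self n) hJm, controllableSubspace_neg_add_mul]

end LinearQuantumSystem

theorem exists_doubled_basis_Rco_Rncnoo_general
    (n m : ℕ)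
    (Ωm Ωp : Matrix (Fin n) (Fin n) ℂ) (Cm Cp : Matrix (Fin m) (Fin n) ℂ)
    (Ω : Matrix (Fin n ⊕ Fin n) (Fin n ⊕ Fin n) ℂ) (hΩ : Ω = doubledUp Ωm Ωp)
    (hΩH : Ω.IsHermitian)
    (𝒞 : Matrix (Fin m ⊕ Fin m) (Fin n ⊕ Fin n) ℂ) (h𝒞 : 𝒞 = doubledUp Cm Cp)
    (𝒜 : Matrix (Fin n ⊕ Fin n) (Fin n ⊕ Fin n) ℂ)
    (h𝒜 : 𝒜 = (-Complex.I) • (Jmat n * Ω) - (1 / 2 : ℂ) • (flat 𝒞 * 𝒞))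
    (ℬ : Matrix (Fin n ⊕ Fin n) (Fin m ⊕ Fin m) ℂ) (hℬ : ℬ = -flat 𝒞) :
    (∃ (n₁ : ℕ) (Z₁ : Matrix (Fin n) (Fin n₁) ℂ),
      Z₁ᴴ * Z₁ = 1 ∧
      LinearMap.range ((Matrix.fromBlocks Z₁ 0 0 (mconj Z₁)).mulVecLin) =
        ctrbSub n m 𝒜 ℬ ⊓ orthComp (unobsSub n m 𝒜 𝒞)) ∧
    (∃ (n₂ : ℕ) (Z₂ : Matrix (Fin n) (Fin n₂) ℂ),
      Z₂ᴴ * Z₂ = 1 ∧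
      LinearMap.range ((Matrix.fromBlocks Z₂ 0 0 (mconj Z₂)).mulVecLin) =
        orthComp (ctrbSub n m 𝒜 ℬ) ⊓ unobsSub n m 𝒜 𝒞) := by
  have hΩD : IsDoubledUp Ω := hΩ ▸ isDoubledUp_doubledUp Ωm Ωp
  have h𝒞D : IsDoubledUp 𝒞 := h𝒞 ▸ isDoubledUp_doubledUp Cm Cp
  have h𝒜D : IsDoubledUp 𝒜 := by
    rw [h𝒜, neg_smul]
    exact hΩD.I_smul_Jmat_mul.neg.sub ((h𝒞D.flat.mul h𝒞D).smul (by simp [IsSelfAdjoint]))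
  have hσ := controllableSubspace_le_comap_swapConj h𝒜D (hℬ ▸ h𝒞D.flat.neg)
  have hctrb : ctrbSub n m 𝒜 ℬ = controllableSubspace 𝒜 ℬ :=
    biSup_range_pow_mul_eq_controllableSubspace (by simp [two_mul]) 𝒜 ℬ
  rw [LinearQuantumSystem.unobsSub_eq hΩH h𝒜 hℬ, hctrb, orthComp_orthComp,
    orthComp_map_of_mem_unitary (Jmat_mem_unitary n)]
  exact ⟨exists_range_fromBlocks_mconj_eq_inf_map_Jmat hσ,
    exists_range_fromBlocks_mconj_eq_inf_map_Jmat (orthComp_le_comap_swapConj hσ)⟩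

/-- **Lemma (basis of `R_co` and `R_c̄ō`).** For a general linear quantum system there exist
`n₁ ≥ 0` and `Z₁ ∈ ℂ^{n×n₁}` with `Z₁ᴴZ₁ = I` whose block-diagonal matrix
`[Z₁ 0; 0 conj Z₁]` has column space `R_co`, and similarly `n₂, Z₂` for `R_c̄ō`. -/
theorem exists_doubled_basis_Rco_Rncnoo
    (n m : ℕ) (hn : 0 < n) (hm : 0 < m)
    (Ωm Ωp : Matrix (Fin n) (Fin n) ℂ) (Cm Cp : Matrix (Fin m) (Fin n) ℂ)
    (Ω : Matrix (Fin n ⊕ Fin n) (Fin n ⊕ Fin n) ℂ) (hΩ : Ω = doubledUp Ωm Ωp)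
    (hΩH : Ω.IsHermitian)
    (𝒞 : Matrix (Fin m ⊕ Fin m) (Fin n ⊕ Fin n) ℂ) (h𝒞 : 𝒞 = doubledUp Cm Cp)
    (𝒜 : Matrix (Fin n ⊕ Fin n) (Fin n ⊕ Fin n) ℂ)
    (h𝒜 : 𝒜 = (-Complex.I) • (Jmat n * Ω) - (1 / 2 : ℂ) • (flat 𝒞 * 𝒞))
    (ℬ : Matrix (Fin n ⊕ Fin n) (Fin m ⊕ Fin m) ℂ) (hℬ : ℬ = -flat 𝒞) :
    (∃ (n₁ : ℕ) (Z₁ : Matrix (Fin n) (Fin n₁) ℂ),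
      Z₁ᴴ * Z₁ = 1 ∧
      LinearMap.range ((Matrix.fromBlocks Z₁ 0 0 (mconj Z₁)).mulVecLin) =
        ctrbSub n m 𝒜 ℬ ⊓ orthComp (unobsSub n m 𝒜 𝒞)) ∧
    (∃ (n₂ : ℕ) (Z₂ : Matrix (Fin n) (Fin n₂) ℂ),
      Z₂ᴴ * Z₂ = 1 ∧
      LinearMap.range ((Matrix.fromBlocks Z₂ 0 0 (mconj Z₂)).mulVecLin) =
        orthComp (ctrbSub n m 𝒜 ℬ) ⊓ unobsSub n m 𝒜 𝒞) :=
  exists_doubled_basis_Rco_Rncnoo_general n m Ωm Ωp Cm Cp Ω hΩ hΩH 𝒞 h𝒞 𝒜 h𝒜 ℬ hℬ
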